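/- Let X be an isotropic rotationally invariant random vector in ℝⁿ whose radial distribution has finite moments of all orders. Then for every ξ ∈ ℝⁿ, Λ_X(ξ) ≥ Λ_{√n θ}(ξ) and consequently Λ*_X(x) ≤ Λ*_{√n θ}(x) for all x, where θ is uniform on the unit sphere S^{n−1}. -/

import Mathlib

/-!
Both sides are expanded along the even part of the exponential series. Symmetry turns
`exp ⟪y, ξ⟫` into `cosh ⟪y, ξ⟫`, and rotation invariance lets one replace `ξ` by `‖ξ‖ θ` with
`θ ∼ σ` inside the `μ`-integral; after swapping the integrals, rotation invariance of `σ` gives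
`E exp ⟪X, ξ⟫ = E φ(‖X‖²)` and `E exp ⟪√n θ, ξ⟫ = φ(n)`, where `φ(s) = ∑ₖ mₖ sᵏ` with
`mₖ = E ⟪θ, ξ⟫^(2k) / (2k)! ≥ 0`. Jensen, `E ‖X‖^(2k) ≥ (E ‖X‖²)^k = n^k`, compares the series
term by term. Working with lower Lebesgue integrals lets series and integrals commute with no
integrability conditions.
-/

open MeasureTheory Real Set

/-- The cumulant generating function of a measure on `ℝⁿ`, with value `⊤` when the
exponential moment is infinite. -/
noncomputable def logLaplace {n : ℕ} (μ : Measure (EuclideanSpace ℝ (Fin n)))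
    (ξ : EuclideanSpace ℝ (Fin n)) : EReal :=
  open scoped Classical in
  if Integrable (fun y => Real.exp (inner ℝ y ξ : ℝ)) μ then
    ((Real.log (∫ y, Real.exp ((inner ℝ y ξ : ℝ)) ∂μ) : ℝ) : EReal)
  else ⊤

/-- The Cramér transform `Λ*_μ(x) = sup_ξ (⟨x,ξ⟩ − Λ_μ(ξ))`, with values in `EReal`. -/
noncomputable def cramerE {n : ℕ} (μ : Measure (EuclideanSpace ℝ (Fin n)))
    (x : EuclideanSpace ℝ (Fin n)) : EReal :=
  ⨆ ξ : EuclideanSpace ℝ (Fin n), (((inner ℝ x ξ : ℝ) : EReal) - logLaplace μ ξ)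

open scoped ENNReal RealInnerProductSpace Nat

theorem ENNReal.pow_lintegral_le_lintegral_pow {α : Type*} [MeasurableSpace α] {μ : Measure α}
    [IsProbabilityMeasure μ] {g : α → ℝ≥0∞} (hg : AEMeasurable g μ) (m : ℕ) :
    (∫⁻ a, g a ∂μ) ^ m ≤ ∫⁻ a, g a ^ m ∂μ := by
  rcases Nat.eq_zero_or_pos m with rfl | hm
  · simp
  have hp : (0 : ℝ) ≤ (m : ℝ)⁻¹ := by positivity
  have hq : (0 : ℝ) ≤ 1 - (m : ℝ)⁻¹ := sub_nonneg.2 (inv_le_one_of_one_le₀ (by exact_mod_cast hm))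
  have holder := ENNReal.lintegral_mul_norm_pow_le (hg.pow_const m) (aemeasurable_const (b := 1))
    hp hq (add_sub_cancel _ _)
  simp only [ENNReal.pow_rpow_inv_natCast hm.ne', ENNReal.one_rpow, mul_one, lintegral_const,
    measure_univ] at holder
  calc (∫⁻ a, g a ∂μ) ^ m ≤ ((∫⁻ a, g a ^ m ∂μ) ^ (m : ℝ)⁻¹) ^ m := by gcongr
    _ = ∫⁻ a, g a ^ m ∂μ := ENNReal.rpow_inv_natCast_pow hm.ne' _

theorem ENNReal.tsum_mul_pow_le_lintegral_tsum_mul_pow {α : Type*} [MeasurableSpace α]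
    {μ : Measure α} [IsProbabilityMeasure μ] (c : ℕ → ℝ≥0∞) {G : α → ℝ≥0∞}
    (hG : AEMeasurable G μ) {x : ℝ≥0∞} (hx : x ≤ ∫⁻ a, G a ∂μ) :
    ∑' k, c k * x ^ k ≤ ∫⁻ a, ∑' k, c k * G a ^ k ∂μ := by
  rw [lintegral_tsum fun k => (hG.pow_const k).const_mul _]
  refine ENNReal.tsum_le_tsum fun k => ?_
  rw [lintegral_const_mul'' _ (hG.pow_const k)]
  gcongr
  exact (pow_le_pow_left' hx k).trans (ENNReal.pow_lintegral_le_lintegral_pow hG k)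

theorem ENNReal.ofReal_cosh_eq_tsum (x : ℝ) :
    ENNReal.ofReal (cosh x) = ∑' k, ENNReal.ofReal (x ^ (2 * k) / (2 * k)!) := by
  rw [← (hasSum_cosh x).tsum_eq]
  exact ENNReal.ofReal_tsum_of_nonneg (fun k => by rw [pow_mul]; positivity)
    (hasSum_cosh x).summable

theorem lintegral_ofReal_cosh_mul {α : Type*} [MeasurableSpace α] (ν : Measure α) {h : α → ℝ}
    (hh : AEMeasurable h ν) (t : ℝ) :
    ∫⁻ a, ENNReal.ofReal (cosh (t * h a)) ∂ν
      = ∑' k, (∫⁻ a, ENNReal.ofReal (h a ^ (2 * k) / (2 * k)!) ∂ν) *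
          ENNReal.ofReal (t ^ 2) ^ k := by
  have hmeas (k : ℕ) : AEMeasurable (fun a => ENNReal.ofReal (h a ^ (2 * k) / (2 * k)!)) ν := by
    fun_prop
  have hterm (a : α) : ENNReal.ofReal (cosh (t * h a))
      = ∑' k, ENNReal.ofReal (t ^ 2) ^ k * ENNReal.ofReal (h a ^ (2 * k) / (2 * k)!) := by
    rw [ENNReal.ofReal_cosh_eq_tsum]
    congr 1 with k
    rw [mul_pow, mul_div_assoc, ENNReal.ofReal_mul (by rw [pow_mul]; positivity), pow_mul,
      ENNReal.ofReal_pow (sq_nonneg t)]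
  rw [lintegral_congr hterm, lintegral_tsum fun k => (hmeas k).const_mul _]
  congr 1 with k
  rw [lintegral_const_mul'' _ (hmeas k), mul_comm]

section

variable {F : Type*} [NormedAddCommGroup F] [InnerProductSpace ℝ F] [MeasurableSpace F]
  [BorelSpace F]

theorem lintegral_comp_inner_eq_of_norm_eq {ν : Measure F}
    (hν : ∀ O : F ≃ₗᵢ[ℝ] F, ν.map O = ν) (f : ℝ → ℝ≥0∞) {v w : F} (h : ‖v‖ = ‖w‖) :
    ∫⁻ y, f ⟪y, v⟫ ∂ν = ∫⁻ y, f ⟪y, w⟫ ∂ν := by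
  obtain ⟨O, hO⟩ : ∃ O : F ≃ₗᵢ[ℝ] F, O v = w := ⟨_, Submodule.reflection_sub h⟩
  have hpres : MeasurePreserving O ν ν := ⟨O.continuous.measurable, hν O⟩
  conv_rhs => rw [← hpres.lintegral_comp_emb O.toHomeomorph.measurableEmbedding, ← hO]
  simp_rw [LinearIsometryEquiv.inner_map_map]

theorem lintegral_ofReal_exp_inner_eq_cosh {ν : Measure F}
    (hν : ∀ O : F ≃ₗᵢ[ℝ] F, ν.map O = ν) (z : F) :
    ∫⁻ y, ENNReal.ofReal (exp ⟪y, z⟫) ∂ν = ∫⁻ y, ENNReal.ofReal (cosh ⟪y, z⟫) ∂ν := by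
  have hsymm : ∫⁻ y, ENNReal.ofReal (exp (-⟪y, z⟫)) ∂ν = ∫⁻ y, ENNReal.ofReal (exp ⟪y, z⟫) ∂ν := by
    simpa only [inner_neg_right] using
      lintegral_comp_inner_eq_of_norm_eq hν (fun s => ENNReal.ofReal (exp s)) (norm_neg z)
  have hmeas : Measurable fun y : F => ENNReal.ofReal (exp ⟪y, z⟫) := by fun_prop
  refine (ENNReal.mul_right_inj two_ne_zero ENNReal.ofNat_ne_top).1 ?_
  calc 2 * ∫⁻ y, ENNReal.ofReal (exp ⟪y, z⟫) ∂ν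
      = ∫⁻ y, (ENNReal.ofReal (exp ⟪y, z⟫) + ENNReal.ofReal (exp (-⟪y, z⟫))) ∂ν := by
        rw [lintegral_add_left hmeas, hsymm, two_mul]
    _ = ∫⁻ y, 2 * ENNReal.ofReal (cosh ⟪y, z⟫) ∂ν := by
        congr 1 with y
        rw [← ENNReal.ofReal_add (exp_pos _).le (exp_pos _).le, cosh_eq,
          ← ENNReal.ofReal_ofNat 2, ← ENNReal.ofReal_mul zero_le_two]
        ring_nf
    _ = 2 * ∫⁻ y, ENNReal.ofReal (cosh ⟪y, z⟫) ∂ν := lintegral_const_mul' _ _ ENNReal.ofNat_ne_top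

theorem lintegral_comp_inner_eq_lintegral_lintegral_mul_norm [SecondCountableTopology F]
    {μ σ : Measure F} [SFinite μ] [IsProbabilityMeasure σ]
    (hμ : ∀ O : F ≃ₗᵢ[ℝ] F, μ.map O = μ) (hσ : ∀ O : F ≃ₗᵢ[ℝ] F, σ.map O = σ)
    (hσ_sphere : ∀ᵐ θ ∂σ, ‖θ‖ = 1) {f : ℝ → ℝ≥0∞} (hf : Measurable f) (ξ : F) :
    ∫⁻ y, f ⟪y, ξ⟫ ∂μ = ∫⁻ y, ∫⁻ θ, f (‖y‖ * ⟪θ, ξ⟫) ∂σ ∂μ := by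
  have hconst : ∀ᵐ θ ∂σ, ∫⁻ y, f ⟪y, ‖ξ‖ • θ⟫ ∂μ = ∫⁻ y, f ⟪y, ξ⟫ ∂μ := by
    filter_upwards [hσ_sphere] with θ hθ
    refine lintegral_comp_inner_eq_of_norm_eq hμ f ?_
    rw [norm_smul, hθ, norm_norm, mul_one]
  calc ∫⁻ y, f ⟪y, ξ⟫ ∂μ = ∫⁻ θ, ∫⁻ y, f ⟪y, ‖ξ‖ • θ⟫ ∂μ ∂σ := by
        rw [lintegral_congr_ae hconst, lintegral_const, measure_univ, mul_one]
    _ = ∫⁻ y, ∫⁻ θ, f ⟪θ, ‖ξ‖ • y⟫ ∂σ ∂μ := by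
        rw [lintegral_lintegral_swap (by fun_prop)]
        simp_rw [real_inner_smul_right, real_inner_comm]
    _ = ∫⁻ y, ∫⁻ θ, f (‖y‖ * ⟪θ, ξ⟫) ∂σ ∂μ := by
        congr 1 with y
        rw [lintegral_comp_inner_eq_of_norm_eq hσ f (v := ‖ξ‖ • y) (w := ‖y‖ • ξ)
          (by simp only [norm_smul, norm_norm, mul_comm])]
        simp_rw [real_inner_smul_right]

theorem lintegral_ofReal_norm_sq_eq_finrank [FiniteDimensional ℝ F] {μ : Measure F}
    (hiso : ∀ u : F, ‖u‖ = 1 → ∫ y, ⟪y, u⟫ ^ 2 ∂μ = 1) :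
    ∫⁻ y, ENNReal.ofReal (‖y‖ ^ 2) ∂μ = Module.finrank ℝ F := by
  let b := stdOrthonormalBasis ℝ F
  have hcoord (i) : ∫⁻ y, ENNReal.ofReal (⟪y, b i⟫ ^ 2) ∂μ = 1 := by
    have hi := hiso (b i) (b.orthonormal.1 i)
    rw [← ofReal_integral_eq_lintegral_ofReal (.of_integral_ne_zero (by simp [hi]))
      (ae_of_all _ fun y => sq_nonneg _), hi, ENNReal.ofReal_one]
  simp_rw [← b.sum_sq_inner_left, ENNReal.ofReal_sum_of_nonneg fun i _ => sq_nonneg _]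
  rw [lintegral_finsetSum' _ fun i _ => by fun_prop]
  simp [hcoord]

theorem lintegral_ofReal_exp_inner_smul_le [SecondCountableTopology F] {μ σ : Measure F}
    [IsProbabilityMeasure μ] [IsProbabilityMeasure σ]
    (hμ : ∀ O : F ≃ₗᵢ[ℝ] F, μ.map O = μ) (hσ : ∀ O : F ≃ₗᵢ[ℝ] F, σ.map O = σ)
    (hσ_sphere : ∀ᵐ θ ∂σ, ‖θ‖ = 1) {r : ℝ}
    (hr : ENNReal.ofReal (r ^ 2) ≤ ∫⁻ y, ENNReal.ofReal (‖y‖ ^ 2) ∂μ) (ξ : F) :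
    ∫⁻ θ, ENNReal.ofReal (exp ⟪r • θ, ξ⟫) ∂σ ≤ ∫⁻ y, ENNReal.ofReal (exp ⟪y, ξ⟫) ∂μ := by
  set m : ℕ → ℝ≥0∞ := fun k => ∫⁻ θ, ENNReal.ofReal (⟪θ, ξ⟫ ^ (2 * k) / (2 * k)!) ∂σ
  have hσ_series : ∫⁻ θ, ENNReal.ofReal (exp ⟪r • θ, ξ⟫) ∂σ
      = ∑' k, m k * ENNReal.ofReal (r ^ 2) ^ k := by
    simp_rw [real_inner_smul_left, ← real_inner_smul_right]
    rw [lintegral_ofReal_exp_inner_eq_cosh hσ]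
    simp_rw [real_inner_smul_right]
    exact lintegral_ofReal_cosh_mul σ (by fun_prop) r
  have hμ_series : ∫⁻ y, ENNReal.ofReal (exp ⟪y, ξ⟫) ∂μ
      = ∫⁻ y, ∑' k, m k * ENNReal.ofReal (‖y‖ ^ 2) ^ k ∂μ := by
    rw [lintegral_ofReal_exp_inner_eq_cosh hμ,
      lintegral_comp_inner_eq_lintegral_lintegral_mul_norm hμ hσ hσ_sphere
        (f := fun s => ENNReal.ofReal (cosh s)) (by fun_prop)]
    simp_rw [lintegral_ofReal_cosh_mul σ (h := fun θ => ⟪θ, ξ⟫) (by fun_prop)]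
    rfl
  rw [hσ_series, hμ_series]
  exact ENNReal.tsum_mul_pow_le_lintegral_tsum_mul_pow m (by fun_prop) hr

end

theorem logLaplace_le_of_lintegral_le {n : ℕ} {τ μ : Measure (EuclideanSpace ℝ (Fin n))} [NeZero τ]
    {ξ : EuclideanSpace ℝ (Fin n)}
    (h : ∫⁻ y, ENNReal.ofReal (exp ⟪y, ξ⟫) ∂τ ≤ ∫⁻ y, ENNReal.ofReal (exp ⟪y, ξ⟫) ∂μ) :
    logLaplace τ ξ ≤ logLaplace μ ξ := by
  by_cases hμ : Integrable (fun y => exp ⟪y, ξ⟫) μ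
  swap
  · simp [logLaplace, hμ]
  have hτ : Integrable (fun y => exp ⟪y, ξ⟫) τ := by
    refine ⟨by fun_prop, (hasFiniteIntegral_iff_ofReal (ae_of_all _ fun y => (exp_pos _).le)).2 ?_⟩
    exact h.trans_lt hμ.lintegral_lt_top
  have hof {ν : Measure (EuclideanSpace ℝ (Fin n))} (hν : Integrable (fun y => exp ⟪y, ξ⟫) ν) :
      ENNReal.ofReal (∫ y, exp ⟪y, ξ⟫ ∂ν) = ∫⁻ y, ENNReal.ofReal (exp ⟪y, ξ⟫) ∂ν :=
    ofReal_integral_eq_lintegral_ofReal hν (ae_of_all _ fun y => (exp_pos _).le)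
  simp only [logLaplace, if_pos hτ, if_pos hμ, EReal.coe_le_coe_iff]
  rw [← hof hτ, ← hof hμ,
    ENNReal.ofReal_le_ofReal_iff (integral_nonneg fun y => (exp_pos _).le)] at h
  exact log_le_log (integral_exp_pos hτ) h

theorem cramerE_le_of_logLaplace_le {n : ℕ} {τ μ : Measure (EuclideanSpace ℝ (Fin n))}
    (h : ∀ ξ, logLaplace τ ξ ≤ logLaplace μ ξ) (x : EuclideanSpace ℝ (Fin n)) :
    cramerE μ x ≤ cramerE τ x :=
  iSup_mono fun ξ => EReal.sub_le_sub le_rfl (h ξ)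

theorem logLaplace_ge_sphere_of_isotropic_general {n : ℕ}
    (μ : Measure (EuclideanSpace ℝ (Fin n))) [IsProbabilityMeasure μ]
    (hrot : ∀ O : EuclideanSpace ℝ (Fin n) ≃ₗᵢ[ℝ] EuclideanSpace ℝ (Fin n), μ.map O = μ)
    (hiso : ∀ u : EuclideanSpace ℝ (Fin n), ‖u‖ = 1 →
      (∫ y, (inner ℝ y u : ℝ) ∂μ) = 0 ∧ (∫ y, (inner ℝ y u : ℝ) ^ 2 ∂μ) = 1)
    (σ : Measure (EuclideanSpace ℝ (Fin n))) [IsProbabilityMeasure σ]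
    (hσrot : ∀ O : EuclideanSpace ℝ (Fin n) ≃ₗᵢ[ℝ] EuclideanSpace ℝ (Fin n), σ.map O = σ)
    (hσsph : σ (Metric.sphere (0 : EuclideanSpace ℝ (Fin n)) 1) = 1) :
    (∀ ξ : EuclideanSpace ℝ (Fin n),
        logLaplace (σ.map fun y => (Real.sqrt n) • y) ξ ≤ logLaplace μ ξ) ∧
      ∀ x : EuclideanSpace ℝ (Fin n),
        cramerE μ x ≤ cramerE (σ.map fun y => (Real.sqrt n) • y) x := by
  have hσ_sphere : ∀ᵐ θ ∂σ, ‖θ‖ = 1 :=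
    ((ae_mem_iff_measure_eq Metric.isClosed_sphere.measurableSet.nullMeasurableSet).2
      (hσsph.trans measure_univ.symm)).mono fun θ hθ => mem_sphere_zero_iff_norm.1 hθ
  have hsecond : ENNReal.ofReal (√n ^ 2) ≤ ∫⁻ y, ENNReal.ofReal (‖y‖ ^ 2) ∂μ := by
    rw [lintegral_ofReal_norm_sq_eq_finrank fun u hu => (hiso u hu).2,
      finrank_euclideanSpace_fin, sq_sqrt n.cast_nonneg, ENNReal.ofReal_natCast]
  have hlogLaplace (ξ : EuclideanSpace ℝ (Fin n)) :
      logLaplace (σ.map fun y => √n • y) ξ ≤ logLaplace μ ξ := by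
    have : IsProbabilityMeasure (σ.map fun y => √n • y) :=
      Measure.isProbabilityMeasure_map (by fun_prop)
    refine logLaplace_le_of_lintegral_le ?_
    rw [lintegral_map (by fun_prop) (by fun_prop)]
    exact lintegral_ofReal_exp_inner_smul_le hrot hσrot hσ_sphere hsecond ξ
  exact ⟨hlogLaplace, cramerE_le_of_logLaplace_le hlogLaplace⟩

/-- Let `X ∼ μ` be an isotropic rotationally invariant random vector in `ℝⁿ` whose radial
distribution has all moments finite, and let `σ` be the uniform probability measure on the
unit sphere `S^{n−1}` (the unique rotation-invariant probability measure on the sphere).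
Then `Λ_X(ξ) ≥ Λ_{√n θ}(ξ)` for all `ξ`, and consequently `Λ*_X(x) ≤ Λ*_{√n θ}(x)` for
all `x`, where `θ ∼ σ`. -/
theorem logLaplace_ge_sphere_of_isotropic {n : ℕ} (hn : 0 < n)
    (μ : Measure (EuclideanSpace ℝ (Fin n))) [IsProbabilityMeasure μ]
    (hrot : ∀ O : EuclideanSpace ℝ (Fin n) ≃ₗᵢ[ℝ] EuclideanSpace ℝ (Fin n), μ.map O = μ)
    (hiso : ∀ u : EuclideanSpace ℝ (Fin n), ‖u‖ = 1 →
      (∫ y, (inner ℝ y u : ℝ) ∂μ) = 0 ∧ (∫ y, (inner ℝ y u : ℝ) ^ 2 ∂μ) = 1)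
    (hmom : ∀ k : ℕ, Integrable (fun y => ‖y‖ ^ k) μ)
    (σ : Measure (EuclideanSpace ℝ (Fin n))) [IsProbabilityMeasure σ]
    (hσrot : ∀ O : EuclideanSpace ℝ (Fin n) ≃ₗᵢ[ℝ] EuclideanSpace ℝ (Fin n), σ.map O = σ)
    (hσsph : σ (Metric.sphere (0 : EuclideanSpace ℝ (Fin n)) 1) = 1) :
    (∀ ξ : EuclideanSpace ℝ (Fin n),
        logLaplace (σ.map fun y => (Real.sqrt n) • y) ξ ≤ logLaplace μ ξ) ∧
      ∀ x : EuclideanSpace ℝ (Fin n),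
        cramerE μ x ≤ cramerE (σ.map fun y => (Real.sqrt n) • y) x :=
  logLaplace_ge_sphere_of_isotropic_general μ hrot hiso σ hσrot hσsph
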